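/- Let p* be the minimal Walrasian price vector in a market with strong gross substitutes valuations, let q be any packing price vector, and let (z_1,…,z_n) be a packing allocation with respect to q. Then p*(e) ≤ q(e) for every item e with Σ_i z_i(e) > 0. -/

import Mathlib

open Finset

variable {E : Type*} [Fintype E] [DecidableEq E]

/-- Characteristic (unit) vector of an item. -/
def chi (e : E) : E → ℤ := fun f => if f = e then 1 else 0

/-- The integer box `[0, b]_ℤ` of bundles. -/
def Box (b : E → ℤ) : Set (E → ℤ) := {z | ∀ e, 0 ≤ z e ∧ z e ≤ b e}

/-- Quasi-linear utility of a bundle at prices `p`. -/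
noncomputable def util (v : (E → ℤ) → ℤ) (p : E → ℝ) (z : E → ℤ) : ℝ :=
  (v z : ℝ) - ∑ e : E, p e * (z e : ℝ)

/-- Demand set: utility-maximizing bundles in the box. -/
def Demand (b : E → ℤ) (v : (E → ℤ) → ℤ) (p : E → ℝ) : Set (E → ℤ) :=
  {z | z ∈ Box b ∧ ∀ y ∈ Box b, util v p y ≤ util v p z}

/-- Componentwise minimal preferred bundles. -/
def MinDemand (b : E → ℤ) (v : (E → ℤ) → ℤ) (p : E → ℝ) : Set (E → ℤ) :=
  {z | z ∈ Demand b v p ∧ ∀ y ∈ Demand b v p, y ≤ z → y = z}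

/-- Componentwise maximal preferred bundles. -/
def MaxDemand (b : E → ℤ) (v : (E → ℤ) → ℤ) (p : E → ℝ) : Set (E → ℤ) :=
  {z | z ∈ Demand b v p ∧ ∀ y ∈ Demand b v p, z ≤ y → y = z}

/-- M♮-concavity, equivalent to the strong gross substitutes property. -/
def MNatConcave (b : E → ℤ) (v : (E → ℤ) → ℤ) : Prop :=
  ∀ x ∈ Box b, ∀ y ∈ Box b, ∀ e : E, y e < x e →
    v x + v y ≤ v (x - chi e) + v (y + chi e) ∨
    ∃ f : E, x f < y f ∧ v x + v y ≤ v (x - chi e + chi f) + v (y + chi e - chi f)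

/-- M-convex set: exchange property. -/
def MConvex (B : Set (E → ℤ)) : Prop :=
  ∀ x ∈ B, ∀ y ∈ B, ∀ e : E, y e < x e →
    ∃ f : E, x f < y f ∧ x - chi e + chi f ∈ B ∧ y + chi e - chi f ∈ B

/-- `ρ` is the rank function of `B`: `ρ S = max {z(S) : z ∈ B}`. -/
def IsRank (B : Set (E → ℤ)) (ρ : Finset E → ℤ) : Prop :=
  ∀ S : Finset E, IsGreatest ((fun z : E → ℤ => ∑ e ∈ S, z e) '' B) (ρ S)

/-- Prices `p` are packing: a choice of preferred bundles oversells no item. -/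
def Packing {N : Type*} [Fintype N] (b : E → ℤ) (v : N → (E → ℤ) → ℤ) (p : E → ℝ) : Prop :=
  ∃ z : N → E → ℤ, (∀ i, z i ∈ Demand b (v i) p) ∧ ∀ e, ∑ i, z i e ≤ b e

/-- Prices `p` are covering: a choice of preferred bundles sells all items. -/
def Covering {N : Type*} [Fintype N] (b : E → ℤ) (v : N → (E → ℤ) → ℤ) (p : E → ℝ) : Prop :=
  ∃ z : N → E → ℤ, (∀ i, z i ∈ Demand b (v i) p) ∧ ∀ e, b e ≤ ∑ i, z i e

/-- Prices `p` are Walrasian: a choice of preferred bundles exactly exhausts the supply. -/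
def Walrasian {N : Type*} [Fintype N] (b : E → ℤ) (v : N → (E → ℤ) → ℤ) (p : E → ℝ) : Prop :=
  ∃ z : N → E → ℤ, (∀ i, z i ∈ Demand b (v i) p) ∧ ∀ e, ∑ i, z i e = b e

/-!
The indirect utility `V(p) = max_{z ∈ [0,b]} (v z - ⟨p, z⟩)` of an M♮-concave valuation is
submodular in the prices. Along a single coordinate `f` its right derivative is minus the
smallest `f`-demand, and by the exchange property this smallest demand does not decrease when
the other prices go up; integrating gives decreasing differences, hence submodularity.
Summing over buyers, the Lyapunov function `L(p) = Σ_i V_i(p) + ⟨p, b⟩` satisfies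
`L(p ⊓ q) + L(p ⊔ q) ≤ L(p) + L(q)`. Walrasian prices `p` minimise `L`, and a packing price
vector `q` satisfies `L(q) ≤ L(u)` for all `u ≥ q`; therefore `L(p ⊓ q) ≤ L(p)`, so `p ⊓ q` is
again Walrasian and minimality of `p*` gives `p* ≤ p* ⊓ q ≤ q`.
-/

open Filter Topology

section

variable {E : Type*}

lemma add_chi_mem_box [DecidableEq E] {b z : E → ℤ} {f : E} (hz : z ∈ Box b) (hf : z f < b f) :
    z + chi f ∈ Box b := by
  intro e
  have := hz e
  simp only [Pi.add_apply, chi]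
  split_ifs with he
  · subst he; omega
  · omega

lemma sub_chi_mem_box [DecidableEq E] {b z : E → ℤ} {f : E} (hz : z ∈ Box b) (hf : 0 < z f) :
    z - chi f ∈ Box b := by
  intro e
  have := hz e
  simp only [Pi.sub_apply, chi]
  split_ifs with he
  · subst he; omega
  · omega

lemma box_finite [Finite E] (b : E → ℤ) : (Box b).Finite := by
  have : Box b = Set.pi Set.univ fun e => Set.Icc 0 (b e) := by
    ext z; simp only [Set.mem_pi, Set.mem_univ, Set.mem_Icc, true_imp_iff]; rfl
  exact this ▸ Set.Finite.pi fun e => Set.finite_Icc 0 (b e)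

variable [Fintype E]

def cost (p : E → ℝ) (z : E → ℤ) : ℝ := ∑ e, p e * z e

lemma util_eq_sub_cost (v : (E → ℤ) → ℤ) (p : E → ℝ) (z : E → ℤ) :
    util v p z = v z - cost p z := rfl

@[simp] lemma cost_add (p : E → ℝ) (y z : E → ℤ) : cost p (y + z) = cost p y + cost p z := by
  simp [cost, mul_add, Finset.sum_add_distrib]

@[simp] lemma cost_sub (p : E → ℝ) (y z : E → ℤ) : cost p (y - z) = cost p y - cost p z := by
  simp [cost, mul_sub, Finset.sum_sub_distrib]

@[simp] lemma cost_chi [DecidableEq E] (p : E → ℝ) (f : E) : cost p (chi f) = p f := by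
  simp [cost, chi]

lemma cost_sub_left (p q : E → ℝ) (z : E → ℤ) : cost (p - q) z = cost p z - cost q z := by
  simp [cost, sub_mul, Finset.sum_sub_distrib]

lemma cost_add_single [DecidableEq E] (p : E → ℝ) (f : E) (t : ℝ) (z : E → ℤ) :
    cost (p + Pi.single f t) z = cost p z + t * z f := by
  simp [cost, add_mul, Finset.sum_add_distrib, Pi.single_apply]

lemma cost_inf_add_cost_sup (p q : E → ℝ) (z : E → ℤ) :
    cost (p ⊓ q) z + cost (p ⊔ q) z = cost p z + cost q z := by
  simp only [cost, ← Finset.sum_add_distrib, ← add_mul]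
  exact Finset.sum_congr rfl fun e _ => by rw [Pi.inf_apply, Pi.sup_apply, min_add_max]

lemma sum_cost {N : Type*} [Fintype N] (p : E → ℝ) (x : N → E → ℤ) :
    ∑ i, cost p (x i) = ∑ e, p e * ∑ i, x i e := by
  simp only [cost, Int.cast_sum, Finset.mul_sum]
  exact Finset.sum_comm

lemma util_add_single [DecidableEq E] (v : (E → ℤ) → ℤ) (p : E → ℝ) (f : E) (t : ℝ)
    (z : E → ℤ) : util v (p + Pi.single f t) z = util v p z - t * z f := by
  rw [util_eq_sub_cost, util_eq_sub_cost, cost_add_single]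
  ring

noncomputable def boxFinset (b : E → ℤ) : Finset (E → ℤ) := (box_finite b).toFinset

lemma mem_boxFinset {b z : E → ℤ} : z ∈ boxFinset b ↔ z ∈ Box b := Set.Finite.mem_toFinset _

lemma boxFinset_nonempty {b : E → ℤ} (hb : 0 ≤ b) : (boxFinset b).Nonempty :=
  ⟨0, mem_boxFinset.2 fun e => ⟨le_rfl, hb e⟩⟩

/-- The indirect utility `V(p)` (junk value `0` when the box is empty). -/
noncomputable def indirectUtility (b : E → ℤ) (v : (E → ℤ) → ℤ) (p : E → ℝ) : ℝ :=
  if h : (boxFinset b).Nonempty then (boxFinset b).sup' h (util v p) else 0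

section IndirectUtility

variable {b : E → ℤ} {v : (E → ℤ) → ℤ} {p : E → ℝ}

lemma util_le_indirectUtility {z : E → ℤ} (hz : z ∈ Box b) :
    util v p z ≤ indirectUtility b v p := by
  rw [indirectUtility, dif_pos ⟨z, mem_boxFinset.2 hz⟩]
  exact Finset.le_sup' _ (mem_boxFinset.2 hz)

lemma exists_util_eq_indirectUtility (hb : 0 ≤ b) :
    ∃ z ∈ Box b, util v p z = indirectUtility b v p := by
  obtain ⟨z, hz, hzV⟩ := Finset.exists_mem_eq_sup' (boxFinset_nonempty hb) (util v p)
  exact ⟨z, mem_boxFinset.1 hz, by rw [indirectUtility, dif_pos (boxFinset_nonempty hb), hzV]⟩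

lemma indirectUtility_le (hb : 0 ≤ b) {c : ℝ} (h : ∀ z ∈ Box b, util v p z ≤ c) :
    indirectUtility b v p ≤ c := by
  obtain ⟨z, hz, hzV⟩ := exists_util_eq_indirectUtility (v := v) (p := p) hb
  exact hzV ▸ h z hz

lemma mem_demand_iff (hb : 0 ≤ b) {z : E → ℤ} :
    z ∈ Demand b v p ↔ z ∈ Box b ∧ indirectUtility b v p ≤ util v p z :=
  ⟨fun hz => ⟨hz.1, indirectUtility_le hb hz.2⟩,
    fun hz => ⟨hz.1, fun _ hy => (util_le_indirectUtility hy).trans hz.2⟩⟩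

lemma demand_nonempty (hb : 0 ≤ b) : (Demand b v p).Nonempty := by
  obtain ⟨z, hz, hzV⟩ := exists_util_eq_indirectUtility (v := v) (p := p) hb
  exact ⟨z, (mem_demand_iff hb).2 ⟨hz, hzV.ge⟩⟩

lemma demand_finite : (Demand b v p).Finite :=
  (box_finite b).subset fun _ hz => hz.1

variable (v) in
lemma continuous_indirectUtility (hb : 0 ≤ b) : Continuous (indirectUtility b v) := by
  have hV : indirectUtility b v = fun p => (boxFinset b).sup' (boxFinset_nonempty hb)
      fun z => util v p z := funext fun p => dif_pos (boxFinset_nonempty hb)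
  rw [hV]
  exact Continuous.finset_sup'_apply _ fun z _ => by unfold util; fun_prop

end IndirectUtility

section GrossSubstitutes

variable {b : E → ℤ} {v : (E → ℤ) → ℤ} {p p' : E → ℝ}

lemma mem_demand_of_exchange {y w y' w' : E → ℤ} (hy : y ∈ Demand b v p)
    (hw : w ∈ Demand b v p') (hy' : y' ∈ Box b) (hw' : w' ∈ Box b)
    (hval : v y + v w ≤ v y' + v w') (hcost : cost p y' + cost p' w' ≤ cost p y + cost p' w) :
    y' ∈ Demand b v p := by
  refine ⟨hy', fun x hx => (hy.2 x hx).trans ?_⟩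
  have hw'w := hw.2 w' hw'
  have hvalR : (v y + v w : ℝ) ≤ v y' + v w' := by exact_mod_cast hval
  simp only [util_eq_sub_cost] at hw'w ⊢
  linarith

/-- Gross substitutes: the exchange axiom for `y` and `w` moves one copy of `f` out of `y`
without leaving the demand set at `p`, because the other prices are lower at `p` than at `p'`. -/
lemma exists_mem_demand_apply_lt [DecidableEq E] (hv : MNatConcave b v) (hpp : p ≤ p') {f : E}
    (hf : p f = p' f) {y w : E → ℤ} (hy : y ∈ Demand b v p) (hw : w ∈ Demand b v p')
    (hwy : w f < y f) : ∃ y' ∈ Demand b v p, y' f < y f := by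
  have hyf : 0 < y f := by linarith [(hw.1 f).1]
  have hwf : w f < b f := by linarith [(hy.1 f).2]
  rcases hv y hy.1 w hw.1 f hwy with hex | ⟨g, hg, hex⟩
  · refine ⟨y - chi f, mem_demand_of_exchange hy hw (sub_chi_mem_box hy.1 hyf)
      (add_chi_mem_box hw.1 hwf) hex (by simp [hf]), by simp [chi]⟩
  · have hgf : g ≠ f := by rintro rfl; omega
    have hy' : y - chi f + chi g ∈ Box b :=
      add_chi_mem_box (sub_chi_mem_box hy.1 hyf) (by simp [chi, hgf]; linarith [(hw.1 g).2])
    have hw' : w + chi f - chi g ∈ Box b :=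
      sub_chi_mem_box (add_chi_mem_box hw.1 hwf) (by simp [chi, hgf]; linarith [(hy.1 g).1])
    refine ⟨y - chi f + chi g, mem_demand_of_exchange hy hw hy' hw' hex ?_, by simp [chi, hgf.symm]⟩
    simp only [cost_add, cost_sub, cost_chi]
    linarith [hpp g]

lemma exists_mem_demand_apply_le [DecidableEq E] (hb : 0 ≤ b) (hv : MNatConcave b v)
    (hpp : p ≤ p') {f : E} (hf : p f = p' f) {w : E → ℤ} (hw : w ∈ Demand b v p') :
    ∃ y ∈ Demand b v p, y f ≤ w f := by
  obtain ⟨y, hy, hmin⟩ := Set.exists_min_image _ (fun y : E → ℤ => y f) demand_finite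
    (demand_nonempty (v := v) (p := p) hb)
  refine ⟨y, hy, not_lt.1 fun hwy => ?_⟩
  obtain ⟨y', hy', hlt⟩ := exists_mem_demand_apply_lt hv hpp hf hy hw hwy
  exact (hmin y' hy').not_gt hlt

end GrossSubstitutes

lemma monotone_of_forall_eventually_le_add {K : ℝ → ℝ} (hK : Continuous K)
    (h : ∀ t, ∀ᶠ u in 𝓝[>] 0, K t ≤ K (t + u)) : Monotone K := by
  intro a c hac
  refine IsClosed.mem_of_ge_of_forall_exists_gt (s := {t | K a ≤ K t})
    ((isClosed_le continuous_const hK).inter isClosed_Icc) (le_refl (K a)) hac ?_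
  rintro x ⟨hx, -, hxc⟩
  obtain ⟨u, hu, hu0, huc⟩ := ((h x).and (Ioc_mem_nhdsGT (sub_pos.2 hxc))).exists
  exact ⟨x + u, hx.trans hu, by linarith, by linarith⟩

section Submodularity

variable [DecidableEq E] {b : E → ℤ} {v : (E → ℤ) → ℤ}

lemma exists_eventually_indirectUtility_add_single (hb : 0 ≤ b) (p : E → ℝ) (f : E) :
    ∃ y₀ ∈ Demand b v p, (∀ y ∈ Demand b v p, y₀ f ≤ y f) ∧
      ∀ᶠ t in 𝓝[>] 0, indirectUtility b v (p + Pi.single f t) =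
        indirectUtility b v p - t * y₀ f := by
  obtain ⟨y₀, hy₀, hmin⟩ := Set.exists_min_image _ (fun y : E → ℤ => y f) demand_finite
    (demand_nonempty (v := v) (p := p) hb)
  refine ⟨y₀, hy₀, hmin, ?_⟩
  set V := indirectUtility b v p
  have hlocal : ∀ y ∈ boxFinset b, ∀ᶠ t in 𝓝[>] 0, util v p y - t * y f ≤ V - t * y₀ f := by
    intro y hy
    by_cases hyD : y ∈ Demand b v p
    · filter_upwards [self_mem_nhdsWithin] with t (ht : 0 < t)
      have hy₀y : (y₀ f : ℝ) ≤ y f := by exact_mod_cast hmin y hyD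
      nlinarith [util_le_indirectUtility (v := v) (p := p) hyD.1]
    · have hlt : util v p y < V := (util_le_indirectUtility (mem_boxFinset.1 hy)).lt_of_ne
        fun h => hyD ((mem_demand_iff hb).2 ⟨mem_boxFinset.1 hy, h.ge⟩)
      have hcont : ∀ c a : ℝ, Tendsto (fun t : ℝ => a - t * c) (𝓝 0) (𝓝 a) := fun c a =>
        (by fun_prop : Continuous fun t : ℝ => a - t * c).tendsto' 0 a (by simp)
      exact ((hcont _ _).eventually_lt (hcont _ _) hlt).filter_mono nhdsWithin_le_nhds
        |>.mono fun _ => le_of_lt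
  filter_upwards [(Filter.eventually_all_finset _).2 hlocal] with t ht
  refine le_antisymm (indirectUtility_le hb fun y hy => ?_) ?_
  · rw [util_add_single]
    exact ht y (mem_boxFinset.2 hy)
  · calc V - t * y₀ f ≤ util v (p + Pi.single f t) y₀ := by
          rw [util_add_single]; linarith [((mem_demand_iff hb).1 hy₀).2]
      _ ≤ _ := util_le_indirectUtility hy₀.1

lemma indirectUtility_add_single_sub_le (hb : 0 ≤ b) (hv : MNatConcave b v) {p p' : E → ℝ}
    (hpp : p ≤ p') {f : E} (hf : p f = p' f) {δ : ℝ} (hδ : 0 ≤ δ) :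
    indirectUtility b v (p' + Pi.single f δ) - indirectUtility b v p' ≤
      indirectUtility b v (p + Pi.single f δ) - indirectUtility b v p := by
  set K : ℝ → ℝ := fun t =>
    indirectUtility b v (p + Pi.single f t) - indirectUtility b v (p' + Pi.single f t)
  have hK : Continuous K := by
    have hV := continuous_indirectUtility v hb
    have hshift : ∀ r : E → ℝ, Continuous fun t : ℝ => r + Pi.single f t := fun r =>
      continuous_const.add (continuous_single (A := fun _ => ℝ) f)
    exact (hV.comp (hshift p)).sub (hV.comp (hshift p'))
  have hmono : Monotone K := by
    refine monotone_of_forall_eventually_le_add hK fun t => ?_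
    have hle : p + Pi.single f t ≤ p' + Pi.single f t := add_le_add_left hpp _
    have hft : (p + Pi.single f t : E → ℝ) f = (p' + Pi.single f t : E → ℝ) f := by simp [hf]
    obtain ⟨y₀, -, hy₀, hy⟩ := exists_eventually_indirectUtility_add_single hb (p + Pi.single f t) f
    obtain ⟨w₀, hw₀, -, hw⟩ :=
      exists_eventually_indirectUtility_add_single hb (p' + Pi.single f t) f
    obtain ⟨y, hyD, hyw⟩ := exists_mem_demand_apply_le hb hv hle hft hw₀
    have hy₀w₀ : (y₀ f : ℝ) ≤ w₀ f := by exact_mod_cast (hy₀ y hyD).trans hyw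
    filter_upwards [hy, hw, self_mem_nhdsWithin] with u hu hu' (hu0 : 0 < u)
    simp only [K, Pi.single_add, ← add_assoc, hu, hu']
    nlinarith
  have := hmono hδ
  simp only [K, Pi.single_zero, add_zero] at this
  linarith

lemma indirectUtility_add_sub_le (hb : 0 ≤ b) (hv : MNatConcave b v) {p p' c : E → ℝ}
    (hpp : p ≤ p') (hc : 0 ≤ c) (hpc : ∀ e, c e ≠ 0 → p e = p' e) :
    indirectUtility b v (p' + c) - indirectUtility b v p' ≤
      indirectUtility b v (p + c) - indirectUtility b v p := by
  suffices h : ∀ s : Finset E,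
      indirectUtility b v (p' + ∑ e ∈ s, Pi.single e (c e)) - indirectUtility b v p' ≤
        indirectUtility b v (p + ∑ e ∈ s, Pi.single e (c e)) - indirectUtility b v p by
    simpa only [Finset.univ_sum_single] using h Finset.univ
  intro s
  induction s using Finset.induction_on with
  | empty => simp
  | insert g s hg ih =>
    rw [Finset.sum_insert hg, add_comm (Pi.single g (c g) : E → ℝ), ← add_assoc, ← add_assoc]
    by_cases hcg : c g = 0
    · simpa [hcg] using ih
    · have := indirectUtility_add_single_sub_le hb hv (f := g)
        (add_le_add_left hpp (∑ e ∈ s, Pi.single e (c e))) (by simp [hpc g hcg]) (hc g)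
      linarith

theorem indirectUtility_inf_add_sup_le (hb : 0 ≤ b) (hv : MNatConcave b v) (p q : E → ℝ) :
    indirectUtility b v (p ⊓ q) + indirectUtility b v (p ⊔ q) ≤
      indirectUtility b v p + indirectUtility b v q := by
  have hpc : ∀ e, (q - p ⊓ q) e ≠ 0 → (p ⊓ q) e = p e := by
    intro e he
    simp only [Pi.sub_apply, Pi.inf_apply, sub_ne_zero] at he ⊢
    rcases min_choice (p e) (q e) with h | h
    · exact h
    · exact absurd h.symm he
  have h := indirectUtility_add_sub_le hb hv (inf_le_left : p ⊓ q ≤ p)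
    (sub_nonneg.2 inf_le_right) hpc
  rw [add_sub_cancel, ← add_sub_assoc, ← inf_add_sup p q, add_sub_cancel_left] at h
  linarith

end Submodularity

section Lyapunov

variable {N : Type*} [Fintype N] {b : E → ℤ} {v : N → (E → ℤ) → ℤ}

noncomputable def lyapunov (b : E → ℤ) (v : N → (E → ℤ) → ℤ) (p : E → ℝ) : ℝ :=
  ∑ i, indirectUtility b (v i) p + cost p b

lemma sum_util_add_cost {x : N → E → ℤ} (hxb : ∀ e, ∑ i, x i e = b e) (p : E → ℝ) :
    ∑ i, util (v i) p (x i) + cost p b = ∑ i, (v i (x i) : ℝ) := by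
  have : ∑ i, cost p (x i) = cost p b := by
    rw [sum_cost]; simp only [hxb]; rfl
  simp only [util_eq_sub_cost, Finset.sum_sub_distrib, this, sub_add_cancel]

lemma mem_demand_of_lyapunov_le (hb : 0 ≤ b) {p m : E → ℝ} {x : N → E → ℤ}
    (hx : ∀ i, x i ∈ Demand b (v i) p) (hxb : ∀ e, ∑ i, x i e = b e)
    (hm : lyapunov b v m ≤ lyapunov b v p) (i : N) : x i ∈ Demand b (v i) m := by
  have hle : ∀ j ∈ Finset.univ, util (v j) m (x j) ≤ indirectUtility b (v j) m :=
    fun j _ => util_le_indirectUtility (hx j).1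
  have hLp : lyapunov b v p ≤ ∑ j, util (v j) p (x j) + cost p b :=
    add_le_add_left (Finset.sum_le_sum fun j _ => ((mem_demand_iff hb).1 (hx j)).2) _
  have hsum : ∑ j, util (v j) m (x j) = ∑ j, indirectUtility b (v j) m := by
    refine le_antisymm (Finset.sum_le_sum hle) ?_
    have := sum_util_add_cost (v := v) hxb p
    have := sum_util_add_cost (v := v) hxb m
    unfold lyapunov at hm hLp
    linarith
  exact (mem_demand_iff hb).2
    ⟨(hx i).1, ((Finset.sum_eq_sum_iff_of_le hle).1 hsum i (Finset.mem_univ i)).ge⟩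

lemma lyapunov_le_of_packing (hb : 0 ≤ b) {q u : E → ℝ} {z : N → E → ℤ}
    (hz : ∀ i, z i ∈ Demand b (v i) q) (hzb : ∀ e, ∑ i, z i e ≤ b e) (hqu : q ≤ u) :
    lyapunov b v q ≤ lyapunov b v u := by
  have hi : ∀ i ∈ Finset.univ, indirectUtility b (v i) q - cost (u - q) (z i) ≤
      indirectUtility b (v i) u := fun i _ => by
    have hu := util_le_indirectUtility (v := v i) (p := u) (hz i).1
    have hq := ((mem_demand_iff hb).1 (hz i)).2
    simp only [util_eq_sub_cost, cost_sub_left] at hu hq ⊢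
    linarith
  have hcost : ∑ i, cost (u - q) (z i) ≤ cost (u - q) b := by
    rw [sum_cost]
    exact Finset.sum_le_sum fun e _ =>
      mul_le_mul_of_nonneg_left (by exact_mod_cast hzb e) (sub_nonneg.2 (hqu e))
  have := Finset.sum_le_sum hi
  rw [Finset.sum_sub_distrib] at this
  unfold lyapunov
  rw [cost_sub_left] at hcost
  linarith

lemma lyapunov_inf_add_sup_le [DecidableEq E] (hb : 0 ≤ b) (hv : ∀ i, MNatConcave b (v i))
    (p q : E → ℝ) : lyapunov b v (p ⊓ q) + lyapunov b v (p ⊔ q) ≤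
      lyapunov b v p + lyapunov b v q := by
  have := Finset.sum_le_sum fun i (_ : i ∈ Finset.univ) =>
    indirectUtility_inf_add_sup_le hb (hv i) p q
  simp only [Finset.sum_add_distrib] at this
  unfold lyapunov
  linarith [cost_inf_add_cost_sup p q b]

theorem Walrasian.inf_of_packing [DecidableEq E] (hb : 0 ≤ b) (hv : ∀ i, MNatConcave b (v i))
    {p q : E → ℝ} (hp : Walrasian b v p) (hq : Packing b v q) : Walrasian b v (p ⊓ q) := by
  obtain ⟨x, hx, hxb⟩ := hp
  obtain ⟨z, hz, hzb⟩ := hq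
  have hsup := lyapunov_le_of_packing hb hz hzb (le_sup_right : q ≤ p ⊔ q)
  have hsub := lyapunov_inf_add_sup_le hb hv p q
  exact ⟨x, mem_demand_of_lyapunov_le hb hx hxb (by linarith), hxb⟩

end Lyapunov

end

theorem stmt15_general {N : Type*} [Fintype N] (b : E → ℤ) (hb : 0 ≤ b)
    (v : N → (E → ℤ) → ℤ) (hsgs : ∀ i, MNatConcave b (v i))
    (pstar : E → ℝ) (hps : 0 ≤ pstar)
    (hW : Walrasian b v pstar)
    (hmin : ∀ p : E → ℝ, 0 ≤ p → Walrasian b v p → pstar ≤ p)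
    (q : E → ℝ) (hq : 0 ≤ q)
    (z : N → E → ℤ) (hz : ∀ i, z i ∈ Demand b (v i) q)
    (hpack : ∀ e, ∑ i, z i e ≤ b e) :
    ∀ e : E, 0 < ∑ i, z i e → pstar e ≤ q e := by
  intro e _
  have hWinf := hW.inf_of_packing hb hsgs ⟨z, hz, hpack⟩
  exact (le_inf_iff.1 (hmin _ (le_inf hps hq) hWinf)).2 e

/-- If `p*` is the minimal Walrasian price vector and `q` a packing price vector
with packing allocation `z`, then `p*(e) ≤ q(e)` for every item `e` that is at
least partially sold in the allocation. -/
theorem stmt15 {N : Type*} [Fintype N] (b : E → ℤ) (hb : 0 ≤ b)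
    (v : N → (E → ℤ) → ℤ) (hsgs : ∀ i, MNatConcave b (v i))
    (hmono : ∀ i, ∀ x ∈ Box b, ∀ y ∈ Box b, x ≤ y → v i x ≤ v i y)
    (pstar : E → ℝ) (hps : 0 ≤ pstar)
    (hW : Walrasian b v pstar)
    (hmin : ∀ p : E → ℝ, 0 ≤ p → Walrasian b v p → pstar ≤ p)
    (q : E → ℝ) (hq : 0 ≤ q)
    (z : N → E → ℤ) (hz : ∀ i, z i ∈ Demand b (v i) q)
    (hpack : ∀ e, ∑ i, z i e ≤ b e) :
    ∀ e : E, 0 < ∑ i, z i e → pstar e ≤ q e :=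
  stmt15_general b hb v hsgs pstar hps hW hmin q hq z hz hpack
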